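/- arXiv:math/0612433 — 2 statements merged into one kernel-verified Lean document; each statement's English description precedes it below -/
import Mathlib

section
/- Let 2 < p < ∞, t > 0, s > 0, and suppose there exists C ≥ 0 such that for every f ∈ L^p(ℂⁿ, dv_s) the function w ↦ e^{t⟨z,w⟩} f(w) is dv_t-integrable for a.e. z ∈ ℂⁿ and ∫_{ℂⁿ} |S_t f|^p dv_s ≤ C^p ∫_{ℂⁿ} |f|^p dv_s, where S_t f(z) = ∫_{ℂⁿ} e^{t⟨z,w⟩} f(w) dv_t(w). Then p·t = 2s. -/
open MeasureTheory

/-- `|z|² = |z₁|² + ⋯ + |zₙ|²` on `ℂⁿ`. -/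
noncomputable def nsq {n : ℕ} (z : Fin n → ℂ) : ℝ := ∑ i, Complex.normSq (z i)

/-- `⟨z,w⟩ = z₁·conj w₁ + ⋯ + zₙ·conj wₙ` on `ℂⁿ`. -/
noncomputable def herm {n : ℕ} (z w : Fin n → ℂ) : ℂ := ∑ i, z i * (starRingEnd ℂ) (w i)

/-- The Gaussian probability measure `dv_t(z) = (t/π)^n e^{-t|z|²} dv(z)` on `ℂⁿ`. -/
noncomputable def gaussMeasure (n : ℕ) (t : ℝ) : Measure (Fin n → ℂ) :=
  volume.withDensity fun z => ENNReal.ofReal ((t / Real.pi) ^ n * Real.exp (-t * nsq z))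

/-- Boundedness of the operator `S_t f(z) = ∫ e^{t⟨z,w⟩} f(w) dv_t(w)` on `L^p(ℂⁿ, dv_s)`
with constant `C`: for every `f ∈ L^p(dv_s)` the integrand is `dv_t`-integrable for a.e. `z`
and `∫ |S_t f|^p dv_s ≤ C^p ∫ |f|^p dv_s`. -/
def SBounded (n : ℕ) (t s p C : ℝ) : Prop :=
  ∀ f : (Fin n → ℂ) → ℂ, MemLp f (ENNReal.ofReal p) (gaussMeasure n s) →
    (∀ᵐ z ∂(volume : Measure (Fin n → ℂ)),
      Integrable (fun w => Complex.exp ((t : ℂ) * herm z w) * f w) (gaussMeasure n t)) ∧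
    ∫⁻ z, ENNReal.ofReal
        (‖∫ w, Complex.exp ((t : ℂ) * herm z w) * f w ∂(gaussMeasure n t)‖ ^ p)
      ∂(gaussMeasure n s)
      ≤ ENNReal.ofReal (C ^ p) *
        ∫⁻ z, ENNReal.ofReal (‖f z‖ ^ p) ∂(gaussMeasure n s)

/-!
Test the inequality on `f_x(w) = exp (x w₁ + conj w₁)`, `x ∈ ℝ`. Completing the square in the
complex Gaussian integral `∫ exp (α w + β w̄) dv_t(w) = exp (α β / t)` gives
`S_t f_x(z) = exp (x z₁ + x / t)`, and both sides of the inequality are explicit: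
`∫ |S_t f_x|^p dv_s = exp ((p x)² / 4s + p x / t)` and `∫ |f_x|^p dv_s = exp (p² (x + 1)² / 4s)`.
Their quotient is `exp (x (p / t - p² / 2s) - p² / 4s)`, which stays bounded by `C^p` for all real
`x` only if `p / t = p² / 2s`.
-/

open Complex
open scoped ComplexConjugate Real

section ComplexGaussian

variable {t : ℝ}

lemma cexp_linear_sub_normSq_eq_mul (α β : ℂ) (x y : ℝ) :
    cexp (α * (x + y * I) + β * conj (x + y * I) - t * normSq (x + y * I))
      = cexp (-t * x ^ 2 + (α + β) * x + 0) * cexp (-t * y ^ 2 + (α - β) * I * y + 0) := by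
  rw [← Complex.exp_add, normSq_add_mul_I]
  congr 1
  simp only [map_add, map_mul, conj_ofReal, conj_I]
  push_cast
  ring_nf

lemma integrable_cexp_linear_sub_normSq (ht : 0 < t) (α β : ℂ) :
    Integrable fun w : ℂ => cexp (α * w + β * conj w - t * normSq w) := by
  have ht' : 0 < (t : ℂ).re := by simpa using ht
  rw [← volume_preserving_equiv_real_prod.symm.integrable_comp_emb
    (MeasurableEquiv.measurableEmbedding _)]
  have hprod : Integrable fun p : ℝ × ℝ =>
      cexp (-t * p.1 ^ 2 + (α + β) * p.1 + 0) * cexp (-t * p.2 ^ 2 + (α - β) * I * p.2 + 0) := by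
    rw [Measure.volume_eq_prod]
    exact (integrable_cexp_quadratic ht' _ _).mul_prod (integrable_cexp_quadratic ht' _ _)
  refine hprod.congr (ae_of_all _ fun p => ?_)
  simp only [Function.comp_apply, measurableEquivRealProd_symm_apply, mk_eq_add_mul_I,
    cexp_linear_sub_normSq_eq_mul]

lemma integral_cexp_linear_sub_normSq (ht : 0 < t) (α β : ℂ) :
    ∫ w : ℂ, cexp (α * w + β * conj w - t * normSq w)
      = ((π / t : ℝ) : ℂ) * cexp (α * β / t) := by
  have ht' : (-(t : ℂ)).re < 0 := by simpa using ht
  have ht0 : (t : ℂ) ≠ 0 := ofReal_ne_zero.mpr ht.ne'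
  rw [← volume_preserving_equiv_real_prod.symm.integral_comp', Measure.volume_eq_prod]
  simp only [measurableEquivRealProd_symm_apply, mk_eq_add_mul_I, cexp_linear_sub_normSq_eq_mul]
  rw [integral_prod_mul (fun x : ℝ => cexp (-t * x ^ 2 + (α + β) * x + 0))
    (fun y : ℝ => cexp (-t * y ^ 2 + (α - β) * I * y + 0)),
    integral_cexp_quadratic ht', integral_cexp_quadratic ht', mul_mul_mul_comm, neg_neg,
    ← cpow_add _ _ (div_ne_zero (ofReal_ne_zero.mpr Real.pi_ne_zero) ht0),
    ← Complex.exp_add]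
  rw [show (1 / 2 : ℂ) + 1 / 2 = 1 by norm_num, cpow_one, ofReal_div]
  congr 2
  rw [mul_pow, I_sq]
  field_simp
  ring

lemma cexp_sum_linear_sub_nsq_eq_prod {n : ℕ} (α β w : Fin n → ℂ) :
    cexp (∑ i, (α i * w i + β i * conj (w i)) - t * nsq w)
      = ∏ i, cexp (α i * w i + β i * conj (w i) - t * normSq (w i)) := by
  rw [← Complex.exp_sum, Finset.sum_sub_distrib, nsq, ofReal_sum, Finset.mul_sum]

lemma integrable_cexp_sum_linear_sub_nsq {n : ℕ} (ht : 0 < t) (α β : Fin n → ℂ) :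
    Integrable fun w : Fin n → ℂ => cexp (∑ i, (α i * w i + β i * conj (w i)) - t * nsq w) := by
  simp_rw [cexp_sum_linear_sub_nsq_eq_prod]
  exact Integrable.fintype_prod (f := fun i w => cexp (α i * w + β i * conj w - t * normSq w))
    fun i => integrable_cexp_linear_sub_normSq ht (α i) (β i)

lemma integral_cexp_sum_linear_sub_nsq {n : ℕ} (ht : 0 < t) (α β : Fin n → ℂ) :
    ∫ w : Fin n → ℂ, cexp (∑ i, (α i * w i + β i * conj (w i)) - t * nsq w)
      = ((π / t : ℝ) : ℂ) ^ n * cexp ((∑ i, α i * β i) / t) := by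
  simp_rw [cexp_sum_linear_sub_nsq_eq_prod]
  rw [integral_fintype_prod_volume_eq_prod
    (f := fun i w => cexp (α i * w + β i * conj w - t * normSq w))]
  simp_rw [integral_cexp_linear_sub_normSq ht, Finset.prod_mul_distrib, Finset.prod_const,
    Finset.card_univ, Fintype.card_fin, ← Complex.exp_sum, Finset.sum_div]

end ComplexGaussian

section GaussMeasure

variable {n : ℕ} {t : ℝ} {E : Type*} [NormedAddCommGroup E] [NormedSpace ℝ E]

lemma measurable_gaussMeasure_density (n : ℕ) (t : ℝ) :
    Measurable fun z : Fin n → ℂ => ENNReal.ofReal ((t / π) ^ n * Real.exp (-t * nsq z)) := by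
  unfold nsq
  fun_prop

lemma integral_gaussMeasure (ht : 0 ≤ t) (g : (Fin n → ℂ) → E) :
    ∫ w, g w ∂gaussMeasure n t = ∫ w, ((t / π) ^ n * Real.exp (-t * nsq w)) • g w := by
  rw [gaussMeasure, integral_withDensity_eq_integral_toReal_smul
    (measurable_gaussMeasure_density n t) (ae_of_all _ fun _ => ENNReal.ofReal_lt_top)]
  simp_rw [ENNReal.toReal_ofReal (by positivity : 0 ≤ (t / π) ^ n * Real.exp (-t * nsq _))]

lemma integrable_gaussMeasure_iff (ht : 0 ≤ t) {g : (Fin n → ℂ) → E} :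
    Integrable g (gaussMeasure n t) ↔
      Integrable fun w => ((t / π) ^ n * Real.exp (-t * nsq w)) • g w := by
  rw [gaussMeasure, integrable_withDensity_iff_integrable_smul'
    (measurable_gaussMeasure_density n t) (ae_of_all _ fun _ => ENNReal.ofReal_lt_top)]
  simp_rw [ENNReal.toReal_ofReal (by positivity : 0 ≤ (t / π) ^ n * Real.exp (-t * nsq _))]

lemma gaussMeasure_density_smul_cexp (α β w : Fin n → ℂ) :
    ((t / π) ^ n * Real.exp (-t * nsq w)) • cexp (∑ i, (α i * w i + β i * conj (w i)))
      = (((t / π) ^ n : ℝ) : ℂ) * cexp (∑ i, (α i * w i + β i * conj (w i)) - t * nsq w) := by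
  rw [real_smul, ofReal_mul, ofReal_exp, sub_eq_add_neg, Complex.exp_add]
  push_cast
  rw [neg_mul]
  ring

lemma integrable_gaussMeasure_cexp (ht : 0 < t) (α β : Fin n → ℂ) :
    Integrable (fun w => cexp (∑ i, (α i * w i + β i * conj (w i)))) (gaussMeasure n t) := by
  rw [integrable_gaussMeasure_iff ht.le]
  simp_rw [gaussMeasure_density_smul_cexp]
  exact (integrable_cexp_sum_linear_sub_nsq ht α β).const_mul _

lemma integral_gaussMeasure_cexp (ht : 0 < t) (α β : Fin n → ℂ) :
    ∫ w, cexp (∑ i, (α i * w i + β i * conj (w i))) ∂gaussMeasure n t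
      = cexp ((∑ i, α i * β i) / t) := by
  rw [integral_gaussMeasure ht.le]
  simp_rw [gaussMeasure_density_smul_cexp]
  rw [integral_const_mul, integral_cexp_sum_linear_sub_nsq ht, ← mul_assoc, ← ofReal_pow,
    ← ofReal_mul, ← mul_pow, div_mul_div_cancel₀ Real.pi_ne_zero, div_self ht.ne', one_pow, ofReal_one, one_mul]

lemma lintegral_gaussMeasure_exp_re (ht : 0 < t) (i : Fin n) (c d : ℝ) :
    ∫⁻ z, ENNReal.ofReal (Real.exp (c * (z i).re + d)) ∂gaussMeasure n t
      = ENNReal.ofReal (Real.exp (c ^ 2 / (4 * t) + d)) := by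
  set α : Fin n → ℂ := Pi.single i ((c / 2 : ℝ) : ℂ)
  have hcast : ∀ z : Fin n → ℂ, ((Real.exp (c * (z i).re + d) : ℝ) : ℂ)
      = cexp d * cexp (∑ j, (α j * z j + α j * conj (z j))) := by
    intro z
    simp only [α, Pi.single_apply, ite_mul, zero_mul, Finset.sum_add_distrib, Finset.sum_ite_eq',
      Finset.mem_univ, if_true, ← mul_add, add_conj]
    rw [ofReal_exp, ← Complex.exp_add]
    push_cast
    ring_nf
  have hint : Integrable (fun z : Fin n → ℂ => Real.exp (c * (z i).re + d)) (gaussMeasure n t) := by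
    have := ((integrable_gaussMeasure_cexp ht α α).const_mul (cexp d)).re
    simpa only [← hcast, RCLike.re_to_complex, ofReal_re] using this
  rw [← ofReal_integral_eq_lintegral_ofReal hint (ae_of_all _ fun _ => (Real.exp_pos _).le)]
  congr 1
  apply ofReal_injective
  rw [← integral_complex_ofReal]
  simp_rw [hcast]
  rw [integral_const_mul, integral_gaussMeasure_cexp ht]
  simp only [α, Pi.single_apply, ite_mul, zero_mul, Finset.sum_ite_eq', Finset.mem_univ, if_true]
  rw [ofReal_exp, ← Complex.exp_add]
  push_cast
  ring_nf

end GaussMeasure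

section TestFunction

variable {n : ℕ} {t s : ℝ}

noncomputable def expTest (i : Fin n) (x : ℝ) (w : Fin n → ℂ) : ℂ := cexp (x * w i + conj (w i))

lemma norm_expTest_rpow (i : Fin n) (x p : ℝ) (w : Fin n → ℂ) :
    ‖expTest i x w‖ ^ p = Real.exp (p * (x + 1) * (w i).re) := by
  rw [expTest, norm_exp, ← Real.exp_mul]
  congr 1
  simp only [add_re, re_ofReal_mul, conj_re]
  ring

lemma lintegral_norm_expTest_rpow (hs : 0 < s) (i : Fin n) (x p : ℝ) :
    ∫⁻ z, ENNReal.ofReal (‖expTest i x z‖ ^ p) ∂gaussMeasure n s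
      = ENNReal.ofReal (Real.exp ((p * (x + 1)) ^ 2 / (4 * s))) := by
  simpa [norm_expTest_rpow] using lintegral_gaussMeasure_exp_re hs i (p * (x + 1)) 0

lemma memLp_expTest (hs : 0 < s) {p : ℝ} (hp : 0 < p) (i : Fin n) (x : ℝ) :
    MemLp (expTest i x) (ENNReal.ofReal p) (gaussMeasure n s) := by
  have hcont : Continuous (expTest i x) := by
    unfold expTest
    fun_prop
  refine ⟨hcont.aestronglyMeasurable, ?_⟩
  rw [eLpNorm_lt_top_iff_lintegral_rpow_enorm_lt_top (by simpa using hp) ENNReal.ofReal_ne_top,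
    ENNReal.toReal_ofReal hp.le]
  simp_rw [← ofReal_norm, ENNReal.ofReal_rpow_of_nonneg (norm_nonneg _) hp.le,
    lintegral_norm_expTest_rpow hs]
  exact ENNReal.ofReal_lt_top

lemma integral_cexp_herm_mul_expTest (ht : 0 < t) (i : Fin n) (x : ℝ) (z : Fin n → ℂ) :
    ∫ w, cexp (t * herm z w) * expTest i x w ∂gaussMeasure n t = cexp (x * z i + x / t) := by
  have hsum : ∀ w, cexp (t * herm z w) * expTest i x w
      = cexp (∑ j, ((Pi.single i (x : ℂ) : Fin n → ℂ) j * w j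
          + (t * z j + (Pi.single i 1 : Fin n → ℂ) j) * conj (w j))) := by
    intro w
    rw [expTest, ← Complex.exp_add]
    simp only [herm, Pi.single_apply, ite_mul, zero_mul, add_mul, one_mul, Finset.sum_add_distrib,
      Finset.sum_ite_eq', Finset.mem_univ, if_true, Finset.mul_sum, mul_assoc]
    congr 1
    ring
  simp_rw [hsum]
  rw [integral_gaussMeasure_cexp ht, Fintype.sum_eq_single i fun j hj => by simp [hj]]
  simp only [Pi.single_eq_same]
  congr 1
  field_simp [ofReal_ne_zero.mpr ht.ne']

lemma lintegral_norm_integral_cexp_herm_mul_expTest_rpow (ht : 0 < t) (hs : 0 < s) (i : Fin n)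
    (x p : ℝ) :
    ∫⁻ z, ENNReal.ofReal (‖∫ w, cexp (t * herm z w) * expTest i x w ∂gaussMeasure n t‖ ^ p)
        ∂gaussMeasure n s
      = ENNReal.ofReal (Real.exp ((p * x) ^ 2 / (4 * s) + p * x / t)) := by
  have hnorm : ∀ z : Fin n → ℂ, ‖cexp (x * z i + x / t)‖ ^ p
      = Real.exp (p * x * (z i).re + p * x / t) := by
    intro z
    rw [norm_exp, ← Real.exp_mul, ← ofReal_div]
    congr 1
    simp only [add_re, re_ofReal_mul, ofReal_re]
    ring
  simp_rw [integral_cexp_herm_mul_expTest ht, hnorm, lintegral_gaussMeasure_exp_re hs]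

end TestFunction

lemma eq_zero_of_forall_exp_mul_le {a K : ℝ} (h : ∀ x, Real.exp (a * x) ≤ K) : a = 0 := by
  by_contra ha
  have hK := h (Real.log (|K| + 1) / a)
  rw [mul_div_cancel₀ _ ha, Real.exp_log (by positivity)] at hK
  linarith [le_abs_self K]

theorem stmt7 (n : ℕ) (hn : 0 < n) (p t s : ℝ) (hp : 2 < p)
    (ht : 0 < t) (hs : 0 < s)
    (h : ∃ C : ℝ, 0 ≤ C ∧ SBounded n t s p C) :
    p * t = 2 * s := by
  obtain ⟨C, hC, hS⟩ := h
  have hp0 : 0 < p := by linarith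
  have hbound : ∀ x : ℝ,
      Real.exp ((p / t - p ^ 2 / (2 * s)) * x) ≤ C ^ p * Real.exp (p ^ 2 / (4 * s)) := by
    intro x
    have hineq := (hS _ (memLp_expTest hs hp0 ⟨0, hn⟩ x)).2
    rw [lintegral_norm_integral_cexp_herm_mul_expTest_rpow ht hs, lintegral_norm_expTest_rpow hs,
      ← ENNReal.ofReal_mul (by positivity), ENNReal.ofReal_le_ofReal_iff (by positivity),
      ← div_le_iff₀ (Real.exp_pos _), ← Real.exp_sub] at hineq
    calc Real.exp ((p / t - p ^ 2 / (2 * s)) * x)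
        = Real.exp ((p * x) ^ 2 / (4 * s) + p * x / t - (p * (x + 1)) ^ 2 / (4 * s))
          * Real.exp (p ^ 2 / (4 * s)) := by
          rw [← Real.exp_add]
          congr 1
          field_simp
          ring
      _ ≤ C ^ p * Real.exp (p ^ 2 / (4 * s)) := by gcongr
  have hcoeff := eq_zero_of_forall_exp_mul_le hbound
  field_simp at hcoeff
  rw [mul_zero, mul_eq_zero, sub_eq_zero] at hcoeff
  exact (hcoeff.resolve_left hp0.ne').symm
end

section
/- Let t > 0, s > 0, 1 ≤ p < ∞, and suppose p·t = 2s. Then for every f ∈ L^p(ℂⁿ, dv_s), the function w ↦ |e^{t⟨z,w⟩}| |f(w)| is dv_t-integrable for a.e. z ∈ ℂⁿ, and ∫_{ℂⁿ} |S_t f|^p dv_s ≤ ∫_{ℂⁿ} |T_t (|f|)|^p dv_s ≤ 2^{np} ∫_{ℂⁿ} |f|^p dv_s, where S_t f(z) = ∫_{ℂⁿ} e^{t⟨z,w⟩} f(w) dv_t(w) and T_t g(z) = ∫_{ℂⁿ} |e^{t⟨z,w⟩}| g(w) dv_t(w). -/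
open MeasureTheory

/-!
Completing the square, `|e^{t⟨z,w⟩}| e^{-t|w|²} = e^{t|z|²/2} e^{-t|z-w|²/2} e^{-t|w|²/2}`, turns
`T_t g (z)` into `(t/π)ⁿ e^{t|z|²/2}` times the convolution of `G = e^{-t|·|²/2} g` with the
Gaussian `γ = e^{-t|·|²/2}`. As `p t / 2 = s`, the factor `e^{p t|z|²/2}` cancels the density of
`dv_s`, and Young's inequality `‖G ⋆ γ‖_p ≤ ‖γ‖₁ ‖G‖_p` with `‖γ‖₁ = (2π/t)ⁿ` leaves the constant
`((t/π)ⁿ (2π/t)ⁿ)^p = 2^{np}`. The first inequality is `‖∫ F‖ ≤ ∫ ‖F‖`.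
-/

open scoped ENNReal
open Real

namespace ENNReal

variable {α : Type*} [MeasurableSpace α] {μ : Measure α}

theorem rpow_lintegral_mul_le {w f : α → ℝ≥0∞} (hw : AEMeasurable w μ) (hf : AEMeasurable f μ)
    {p : ℝ} (hp : 1 ≤ p) :
    (∫⁻ a, w a * f a ∂μ) ^ p ≤ (∫⁻ a, w a ∂μ) ^ (p - 1) * ∫⁻ a, w a * f a ^ p ∂μ := by
  have hp0 : 0 < p := by linarith
  have hsplit : ∀ a, w a * f a = (w a * f a ^ p) ^ p⁻¹ * w a ^ (1 - p⁻¹) := fun a => by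
    rw [mul_rpow_of_nonneg _ _ (by positivity), ← rpow_mul, mul_inv_cancel₀ hp0.ne', rpow_one,
      mul_right_comm, ← rpow_add_of_nonneg _ _ (by positivity) (by simp [inv_le_one_of_one_le₀ hp]),
      add_sub_cancel, rpow_one]
  have holder := lintegral_mul_norm_pow_le (f := fun a => w a * f a ^ p)
    (hw.mul (hf.pow_const p)) hw (inv_nonneg.2 hp0.le) (by simp [inv_le_one_of_one_le₀ hp])
    (add_sub_cancel _ 1)
  simp_rw [← hsplit] at holder
  calc (∫⁻ a, w a * f a ∂μ) ^ p
      ≤ ((∫⁻ a, w a * f a ^ p ∂μ) ^ p⁻¹ * (∫⁻ a, w a ∂μ) ^ (1 - p⁻¹)) ^ p := by gcongr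
    _ = (∫⁻ a, w a ∂μ) ^ (p - 1) * ∫⁻ a, w a * f a ^ p ∂μ := by
      rw [mul_rpow_of_nonneg _ _ hp0.le, ← rpow_mul, ← rpow_mul, inv_mul_cancel₀ hp0.ne', rpow_one,
        sub_mul, one_mul, inv_mul_cancel₀ hp0.ne', mul_comm]

end ENNReal

section Convolution

variable {G : Type*} [MeasurableSpace G] [AddCommGroup G] [MeasurableAdd₂ G] [MeasurableNeg G]
  {μ : Measure G} [SFinite μ] [μ.IsAddLeftInvariant] [μ.IsNegInvariant]

theorem lintegral_lconvolution_rpow_le {f g : G → ℝ≥0∞} (hf : Measurable f) (hg : Measurable g)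
    {p : ℝ} (hp : 1 ≤ p) :
    ∫⁻ x, (f ⋆ₗ[μ] g) x ^ p ∂μ ≤ (∫⁻ x, g x ∂μ) ^ p * ∫⁻ x, f x ^ p ∂μ := by
  have hweight : ∀ x, ∫⁻ y, g (-y + x) ∂μ = ∫⁻ y, g y ∂μ := fun x => by
    simp_rw [neg_add_eq_sub]; exact lintegral_sub_left_eq_self g x
  have hjensen : ∀ x, (f ⋆ₗ[μ] g) x ^ p
      ≤ (∫⁻ y, g y ∂μ) ^ (p - 1) * ∫⁻ y, g (-y + x) * f y ^ p ∂μ := fun x => by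
    rw [lconvolution_def, ← hweight x]
    simp_rw [mul_comm (f _)]
    exact ENNReal.rpow_lintegral_mul_le (by fun_prop) hf.aemeasurable hp
  calc ∫⁻ x, (f ⋆ₗ[μ] g) x ^ p ∂μ
      ≤ ∫⁻ x, (∫⁻ y, g y ∂μ) ^ (p - 1) * ∫⁻ y, g (-y + x) * f y ^ p ∂μ ∂μ :=
        lintegral_mono hjensen
    _ = (∫⁻ y, g y ∂μ) ^ (p - 1) * ∫⁻ y, ∫⁻ x, g (-y + x) * f y ^ p ∂μ ∂μ := by
      rw [lintegral_const_mul _ (by fun_prop), lintegral_lintegral_swap (by fun_prop)]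
    _ = (∫⁻ y, g y ∂μ) ^ (p - 1) * ∫⁻ y, (∫⁻ y, g y ∂μ) * f y ^ p ∂μ := by
      congr 1
      refine lintegral_congr fun y => ?_
      rw [lintegral_mul_const _ (by fun_prop), lintegral_add_left_eq_self]
    _ = (∫⁻ x, g x ∂μ) ^ p * ∫⁻ x, f x ^ p ∂μ := by
      have h := ENNReal.rpow_add_of_nonneg (x := ∫⁻ y, g y ∂μ) (p - 1) 1 (by linarith) zero_le_one
      rw [sub_add_cancel, ENNReal.rpow_one] at h
      rw [lintegral_const_mul _ (by fun_prop), ← mul_assoc, ← h]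

end Convolution

section Gaussian

variable {n : ℕ}

@[fun_prop]
lemma continuous_nsq : Continuous (nsq (n := n)) := by
  unfold nsq; fun_prop

@[fun_prop]
lemma continuous_herm : Continuous fun zw : (Fin n → ℂ) × (Fin n → ℂ) => herm zw.1 zw.2 := by
  unfold herm; fun_prop

lemma nsq_sub (z w : Fin n → ℂ) : nsq (z - w) = nsq z + nsq w - 2 * (herm z w).re := by
  simp only [nsq, herm, Complex.re_sum, Pi.sub_apply, Complex.normSq_sub, Finset.mul_sum,
    ← Finset.sum_add_distrib, ← Finset.sum_sub_distrib]

noncomputable def gaussWeight (n : ℕ) (c : ℝ) (z : Fin n → ℂ) : ℝ≥0∞ :=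
  ENNReal.ofReal (exp (-c * nsq z))

@[fun_prop]
lemma measurable_gaussWeight (c : ℝ) : Measurable (gaussWeight n c) := by
  unfold gaussWeight; fun_prop

lemma gaussWeight_mul (a b : ℝ) (z : Fin n → ℂ) :
    gaussWeight n a z * gaussWeight n b z = gaussWeight n (a + b) z := by
  rw [gaussWeight, gaussWeight, gaussWeight, ← ENNReal.ofReal_mul (exp_nonneg _), ← exp_add]
  ring_nf

lemma gaussWeight_rpow (c : ℝ) {p : ℝ} (hp : 0 ≤ p) (z : Fin n → ℂ) :
    gaussWeight n c z ^ p = gaussWeight n (c * p) z := by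
  rw [gaussWeight, gaussWeight, ENNReal.ofReal_rpow_of_nonneg (exp_nonneg _) hp, ← exp_mul]
  ring_nf

lemma integral_exp_neg_mul_nsq {c : ℝ} (hc : 0 < c) :
    ∫ z : Fin n → ℂ, exp (-c * nsq z) = (π / c) ^ n := by
  have hC : ∫ z : ℂ, exp (-c * ‖z‖ ^ 2) = π / c := by
    simpa [Complex.finrank_real_complex] using
      GaussianFourier.integral_rexp_neg_mul_sq_norm (V := ℂ) hc
  simp_rw [nsq, Finset.mul_sum, exp_sum, ← Complex.sq_norm]
  rw [volume_pi, integral_fintype_prod_eq_pow (fun z : ℂ => exp (-c * ‖z‖ ^ 2)), hC,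
    Fintype.card_fin]

lemma lintegral_gaussWeight {c : ℝ} (hc : 0 < c) :
    ∫⁻ z, gaussWeight n c z = ENNReal.ofReal ((π / c) ^ n) := by
  rw [← integral_exp_neg_mul_nsq hc, ofReal_integral_eq_lintegral_ofReal]
  · rfl
  · exact Integrable.of_integral_ne_zero (by rw [integral_exp_neg_mul_nsq hc]; positivity)
  · exact Filter.Eventually.of_forall fun z => exp_nonneg _

lemma lintegral_gaussMeasure (c : ℝ) {F : (Fin n → ℂ) → ℝ≥0∞} (hF : Measurable F) :
    ∫⁻ z, F z ∂gaussMeasure n c = ENNReal.ofReal ((c / π) ^ n) * ∫⁻ z, gaussWeight n c z * F z := by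
  rw [gaussMeasure, lintegral_withDensity_eq_lintegral_mul _ (by fun_prop) hF,
    ← lintegral_const_mul _ (by fun_prop)]
  simp only [Pi.mul_apply, gaussWeight, ENNReal.ofReal_mul' (exp_nonneg _), mul_assoc]

lemma gaussMeasure_absolutelyContinuous (c : ℝ) : gaussMeasure n c ≪ volume :=
  withDensity_absolutelyContinuous _ _

lemma volume_absolutelyContinuous_gaussMeasure {c : ℝ} (hc : 0 < c) :
    (volume : Measure (Fin n → ℂ)) ≪ gaussMeasure n c :=
  withDensity_absolutelyContinuous' (by fun_prop)
    (Filter.Eventually.of_forall fun _ => by positivity)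

lemma enorm_cexp_mul_herm (t : ℝ) (z w : Fin n → ℂ) :
    ‖Complex.exp (t * herm z w)‖ₑ = ENNReal.ofReal (exp (t * (herm z w).re)) := by
  rw [← ofReal_norm, Complex.norm_exp, Complex.re_ofReal_mul]

lemma gaussWeight_mul_enorm_cexp_mul_herm (t : ℝ) (z w : Fin n → ℂ) :
    gaussWeight n t w * ‖Complex.exp (t * herm z w)‖ₑ
      = gaussWeight n (-(t / 2)) z * (gaussWeight n (t / 2) (z - w) * gaussWeight n (t / 2) w) := by
  simp only [gaussWeight, enorm_cexp_mul_herm, ← ENNReal.ofReal_mul (exp_nonneg _), ← exp_add,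
    nsq_sub]
  ring_nf

end Gaussian

/-- The operator `T_t` on `ℝ≥0∞`-valued functions. -/
noncomputable def lintegralT (n : ℕ) (t : ℝ) (g : (Fin n → ℂ) → ℝ≥0∞) (z : Fin n → ℂ) : ℝ≥0∞ :=
  ∫⁻ w, ‖Complex.exp (t * herm z w)‖ₑ * g w ∂gaussMeasure n t

section lintegralT

variable {n : ℕ} {t : ℝ} {g : (Fin n → ℂ) → ℝ≥0∞}

lemma lintegralT_eq_lconvolution (hg : Measurable g) (z : Fin n → ℂ) :
    lintegralT n t g z = ENNReal.ofReal ((t / π) ^ n) * (gaussWeight n (-(t / 2)) z *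
      ((gaussWeight n (t / 2) * g) ⋆ₗ gaussWeight n (t / 2)) z) := by
  rw [lintegralT, lintegral_gaussMeasure t (by fun_prop), lconvolution_def,
    ← lintegral_const_mul (gaussWeight n (-(t / 2)) z) (by fun_prop)]
  congr 1
  refine lintegral_congr fun w => ?_
  rw [← mul_assoc, gaussWeight_mul_enorm_cexp_mul_herm, neg_add_eq_sub, Pi.mul_apply]
  ring

lemma lintegralT_congr_ae {g' : (Fin n → ℂ) → ℝ≥0∞} (h : g =ᵐ[volume] g') :
    lintegralT n t g = lintegralT n t g' := by
  funext z
  refine lintegral_congr_ae ?_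
  filter_upwards [(gaussMeasure_absolutelyContinuous t).ae_eq h] with w hw
  rw [hw]

lemma measurable_lintegralT (hg : AEMeasurable g volume) : Measurable (lintegralT n t g) := by
  rw [lintegralT_congr_ae hg.ae_eq_mk, funext (lintegralT_eq_lconvolution hg.measurable_mk)]
  fun_prop

theorem lintegral_lintegralT_rpow_le_of_measurable (hg : Measurable g) {p s : ℝ} (hp : 1 ≤ p)
    (ht : 0 < t) (hpt : p * t = 2 * s) :
    ∫⁻ z, lintegralT n t g z ^ p ∂gaussMeasure n s
      ≤ ENNReal.ofReal (2 ^ ((n : ℝ) * p)) * ∫⁻ z, g z ^ p ∂gaussMeasure n s := by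
  have hp0 : 0 ≤ p := by linarith
  set γ := gaussWeight n (t / 2)
  have hconst : ENNReal.ofReal ((t / π) ^ n) * ∫⁻ z, γ z = ENNReal.ofReal (2 ^ n) := by
    rw [lintegral_gaussWeight (by positivity), ← ENNReal.ofReal_mul (by positivity), ← mul_pow]
    congr 2
    field_simp
  have hcancel : ∀ z, gaussWeight n s z * gaussWeight n (-(t / 2)) z ^ p = 1 := fun z => by
    rw [gaussWeight_rpow _ hp0, gaussWeight_mul, show s + -(t / 2) * p = 0 by linarith, gaussWeight,
      neg_zero, zero_mul, exp_zero, ENNReal.ofReal_one]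
  have hG : ∫⁻ z, (γ * g) z ^ p = ∫⁻ z, gaussWeight n s z * g z ^ p := by
    refine lintegral_congr fun z => ?_
    rw [Pi.mul_apply, ENNReal.mul_rpow_of_nonneg _ _ hp0, gaussWeight_rpow _ hp0,
      show t / 2 * p = s by linarith]
  have hpow : ENNReal.ofReal (2 ^ n) ^ p = ENNReal.ofReal (2 ^ ((n : ℝ) * p)) := by
    rw [ENNReal.ofReal_rpow_of_nonneg (by positivity) hp0, ← rpow_natCast, ← rpow_mul zero_le_two]
  calc ∫⁻ z, lintegralT n t g z ^ p ∂gaussMeasure n s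
      = ENNReal.ofReal ((s / π) ^ n) * ENNReal.ofReal ((t / π) ^ n) ^ p *
          ∫⁻ z, ((γ * g) ⋆ₗ γ) z ^ p := by
        rw [lintegral_gaussMeasure s ((measurable_lintegralT hg.aemeasurable).pow_const p),
          mul_assoc,
          ← lintegral_const_mul' (ENNReal.ofReal ((t / π) ^ n) ^ p) _
            (ENNReal.rpow_ne_top_of_nonneg hp0 ENNReal.ofReal_ne_top)]
        congr 1
        refine lintegral_congr fun z => ?_
        rw [lintegralT_eq_lconvolution hg, ENNReal.mul_rpow_of_nonneg _ _ hp0,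
          ENNReal.mul_rpow_of_nonneg _ _ hp0]
        calc gaussWeight n s z * (ENNReal.ofReal ((t / π) ^ n) ^ p *
              (gaussWeight n (-(t / 2)) z ^ p * ((γ * g) ⋆ₗ γ) z ^ p))
            = (gaussWeight n s z * gaussWeight n (-(t / 2)) z ^ p) *
                (ENNReal.ofReal ((t / π) ^ n) ^ p * ((γ * g) ⋆ₗ γ) z ^ p) := by ring
          _ = _ := by rw [hcancel, one_mul]
    _ ≤ ENNReal.ofReal ((s / π) ^ n) * ENNReal.ofReal ((t / π) ^ n) ^ p *
          ((∫⁻ z, γ z) ^ p * ∫⁻ z, (γ * g) z ^ p) := by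
        gcongr
        exact lintegral_lconvolution_rpow_le (by fun_prop) (by fun_prop) hp
    _ = ENNReal.ofReal (2 ^ ((n : ℝ) * p)) * ∫⁻ z, g z ^ p ∂gaussMeasure n s := by
        rw [lintegral_gaussMeasure s (hg.pow_const p), hG, ← hpow, ← hconst,
          ENNReal.mul_rpow_of_nonneg _ _ hp0]
        ring

theorem lintegral_lintegralT_rpow_le (hg : AEMeasurable g volume) {p s : ℝ} (hp : 1 ≤ p)
    (ht : 0 < t) (hpt : p * t = 2 * s) :
    ∫⁻ z, lintegralT n t g z ^ p ∂gaussMeasure n s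
      ≤ ENNReal.ofReal (2 ^ ((n : ℝ) * p)) * ∫⁻ z, g z ^ p ∂gaussMeasure n s := by
  have hg_ae : g =ᵐ[gaussMeasure n s] hg.mk g :=
    (gaussMeasure_absolutelyContinuous s).ae_eq hg.ae_eq_mk
  have hrhs : ∫⁻ z, g z ^ p ∂gaussMeasure n s = ∫⁻ z, hg.mk g z ^ p ∂gaussMeasure n s :=
    lintegral_congr_ae (hg_ae.mono fun z hz => by simp only [hz])
  rw [lintegralT_congr_ae hg.ae_eq_mk, hrhs]
  exact lintegral_lintegralT_rpow_le_of_measurable hg.measurable_mk hp ht hpt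

lemma ae_lintegralT_lt_top (hg : AEMeasurable g volume) {p s : ℝ} (hp : 1 ≤ p) (ht : 0 < t)
    (hs : 0 < s) (hpt : p * t = 2 * s) (hfin : ∫⁻ z, g z ^ p ∂gaussMeasure n s ≠ ⊤) :
    ∀ᵐ z ∂volume, lintegralT n t g z < ⊤ := by
  have hp0 : 0 < p := by linarith
  have hbound := (lintegral_lintegralT_rpow_le hg hp ht hpt).trans_lt
    (ENNReal.mul_lt_top ENNReal.ofReal_lt_top hfin.lt_top)
  refine (volume_absolutelyContinuous_gaussMeasure hs).ae_le ?_
  filter_upwards [ae_lt_top ((measurable_lintegralT hg).pow_const p) hbound.ne] with z hz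
  exact (ENNReal.rpow_lt_top_iff_of_pos hp0).mp hz

end lintegralT

section Kernel

variable {n : ℕ} {t : ℝ} {f : (Fin n → ℂ) → ℂ}

lemma aestronglyMeasurable_cexp_mul_herm_mul (hf : AEStronglyMeasurable f volume)
    (z : Fin n → ℂ) :
    AEStronglyMeasurable (fun w => Complex.exp (t * herm z w) * f w) (gaussMeasure n t) :=
  (Continuous.aestronglyMeasurable (by fun_prop)).mul
    (hf.mono_ac (gaussMeasure_absolutelyContinuous t))

lemma integral_norm_cexp_mul_herm_mul_norm (hf : AEStronglyMeasurable f volume)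
    (z : Fin n → ℂ) :
    ∫ w, ‖Complex.exp (t * herm z w)‖ * ‖f w‖ ∂gaussMeasure n t
      = (lintegralT n t (‖f ·‖ₑ) z).toReal := by
  simp_rw [← norm_mul, integral_norm_eq_lintegral_enorm
    (aestronglyMeasurable_cexp_mul_herm_mul hf z), enorm_mul]
  rfl

lemma integrable_norm_cexp_mul_herm_mul_norm (hf : AEStronglyMeasurable f volume)
    {z : Fin n → ℂ} (hz : lintegralT n t (‖f ·‖ₑ) z < ⊤) :
    Integrable (fun w => ‖Complex.exp (t * herm z w)‖ * ‖f w‖) (gaussMeasure n t) := by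
  simp_rw [← norm_mul]
  exact Integrable.norm ⟨aestronglyMeasurable_cexp_mul_herm_mul hf z,
    by simp only [HasFiniteIntegral, enorm_mul]; exact hz⟩

end Kernel

theorem stmt10 (n : ℕ) (p t s : ℝ) (hp : 1 ≤ p) (ht : 0 < t) (hs : 0 < s)
    (hpt : p * t = 2 * s)
    (f : (Fin n → ℂ) → ℂ) (hf : MemLp f (ENNReal.ofReal p) (gaussMeasure n s)) :
    (∀ᵐ z ∂(volume : Measure (Fin n → ℂ)),
      Integrable (fun w => ‖Complex.exp ((t : ℂ) * herm z w)‖ * ‖f w‖)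
        (gaussMeasure n t)) ∧
    ∫⁻ z, ENNReal.ofReal
        (‖∫ w, Complex.exp ((t : ℂ) * herm z w) * f w ∂(gaussMeasure n t)‖ ^ p)
      ∂(gaussMeasure n s)
      ≤ ∫⁻ z, ENNReal.ofReal
          ((∫ w, ‖Complex.exp ((t : ℂ) * herm z w)‖ * ‖f w‖
              ∂(gaussMeasure n t)) ^ p)
        ∂(gaussMeasure n s) ∧
    ∫⁻ z, ENNReal.ofReal
        ((∫ w, ‖Complex.exp ((t : ℂ) * herm z w)‖ * ‖f w‖
            ∂(gaussMeasure n t)) ^ p)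
      ∂(gaussMeasure n s)
      ≤ ENNReal.ofReal (2 ^ ((n : ℝ) * p)) *
        ∫⁻ z, ENNReal.ofReal (‖f z‖ ^ p) ∂(gaussMeasure n s) := by
  have hp0 : 0 < p := by linarith
  have hfv : AEStronglyMeasurable f volume :=
    hf.1.mono_ac (volume_absolutelyContinuous_gaussMeasure hs)
  have hnorm : ∫⁻ z, ENNReal.ofReal (‖f z‖ ^ p) ∂gaussMeasure n s
      = ∫⁻ z, ‖f z‖ₑ ^ p ∂gaussMeasure n s := by
    simp_rw [← ENNReal.ofReal_rpow_of_nonneg (norm_nonneg _) hp0.le, ofReal_norm]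
  have hfin : ∫⁻ z, ‖f z‖ₑ ^ p ∂gaussMeasure n s ≠ ⊤ := by
    simpa [ENNReal.toReal_ofReal hp0.le] using (lintegral_rpow_enorm_lt_top_of_eLpNorm_lt_top
      (by simpa using hp0) ENNReal.ofReal_ne_top hf.eLpNorm_lt_top).ne
  refine ⟨?_, ?_, ?_⟩
  · filter_upwards [ae_lintegralT_lt_top hfv.enorm hp ht hs hpt hfin] with z hz
    exact integrable_norm_cexp_mul_herm_mul_norm hfv hz
  · refine lintegral_mono fun z => ENNReal.ofReal_le_ofReal ?_
    gcongr
    exact (norm_integral_le_integral_norm _).trans_eq (by simp_rw [norm_mul])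
  · rw [hnorm]
    refine le_trans (lintegral_mono fun z => ?_) (lintegral_lintegralT_rpow_le hfv.enorm hp ht hpt)
    rw [integral_norm_cexp_mul_herm_mul_norm hfv,
      ← ENNReal.ofReal_rpow_of_nonneg ENNReal.toReal_nonneg hp0.le]
    gcongr
    exact ENNReal.ofReal_toReal_le
end
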